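/- Let C be a category with pullbacks and a terminal object, equipped with its cartesian monoidal structure, and suppose C has coproducts of all small families of objects which are disjoint and universal. Let G be a group, and let A := ∐_{g : G} ⊤ be the G-indexed coproduct of copies of the terminal object, with coproduct inclusions ι_g. Let M be a monoid object of C (an object of Mon_ C) whose underlying object is A, whose unit ⊤ ⟶ A is the inclusion ι_1 indexed by the identity element of G, and whose multiplication A ⊗ A ⟶ A satisfies: for all g, h in G, the composite (ι_g ⊗ ι_h) ≫ mul : ⊤ ⊗ ⊤ ⟶ A equals the canonical isomorphism ⊤ ⊗ ⊤ ≅ ⊤ followed by ι_{g·h}. Then there exists an equivalence of categories Φ from the category Action C G of G-objects of C to the category Mod_ M of M-module objects in C, such that Φ followed by the forgetful functor Mod_ M ⥤ C is naturally isomorphic to the forgetful (evaluation) functor Action C G ⥤ C. -/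

import Mathlib

/-!
Universality of coproducts makes `A ⊗ X ≅ ∐_{g : G} X`, with injections `ι_g ▷ X` (up to the
left unitor), for every `X`: pull the coproduct `A` back along the projection `A ⊗ X ⟶ A`.
Hence an action map `A ⊗ X ⟶ X` is the same as a `G`-indexed family of endomorphisms `ρ g` of
`X`, and, because the multiplication of `A` is `ι_g ⊗ ι_h ↦ ι_{gh}`, the unit and associativity
axioms of an `A`-module become `ρ 1 = 𝟙` and `ρ (g * h) = ρ h ≫ ρ g`.
-/

open CategoryTheory Limits MonoidalCategory

universe u

namespace CategoryTheory.CartesianMonoidalCategory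

lemma isPullback_leftUnitor_inv_comp_whiskerRight {C : Type*} [Category C]
    [CartesianMonoidalCategory C] {B : C} (b : 𝟙_ C ⟶ B) (X : C) :
    IsPullback (toUnit X) ((λ_ X).inv ≫ b ▷ X) b (fst B X) := by
  have w : toUnit X ≫ b = ((λ_ X).inv ≫ b ▷ X) ≫ fst B X := by simp
  refine .of_isLimit <| PullbackCone.IsLimit.mk w (fun s => s.snd ≫ snd B X)
    (fun _ => toUnit_unique _ _) (fun s => ?_) (fun s m _ hm => by simp [← hm])
  ext <;> simp [← s.condition, toUnit_unique s.fst (toUnit _)]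

end CategoryTheory.CartesianMonoidalCategory

namespace CategoryTheory.Limits.Cofan

noncomputable def isColimitOfIsPullback {C : Type*} [Category C] {ι : Type*} {X : ι → C}
    (c : Cofan X) {Y : C} (f : Y ⟶ c.pt)
    [∀ i, HasPullback (c.inj i) f]
    (hc : IsColimit (Cofan.mk Y fun i => pullback.snd (c.inj i) f))
    {P : ι → C} {p : ∀ i, P i ⟶ X i} {q : ∀ i, P i ⟶ Y}
    (h : ∀ i, IsPullback (p i) (q i) (c.inj i) f) :
    IsColimit (Cofan.mk Y q) :=
  Cofan.IsColimit.mk _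
    (fun t => Cofan.IsColimit.desc hc fun i => (h i).isoPullback.inv ≫ t.inj i)
    (fun t i => by
      have hfac := Cofan.IsColimit.fac hc (fun i => (h i).isoPullback.inv ≫ t.inj i) i
      rw [cofan_mk_inj] at hfac ⊢
      rw [← (h i).isoPullback_hom_snd, Category.assoc, hfac, Iso.hom_inv_id_assoc])
    (fun t m hm => Cofan.IsColimit.hom_ext hc _ _ fun i => by
      rw [Cofan.IsColimit.fac, ← hm, cofan_mk_inj, cofan_mk_inj, (h i).isoPullback_inv_snd_assoc])

end CategoryTheory.Limits.Cofan

section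

open MonObj

variable {C : Type*} [Category C] [MonoidalCategory C] {A : C} {G : Type*}
  (p : G → (𝟙_ C ⟶ A))

def tensorIncl (g : G) (X : C) : X ⟶ A ⊗ X := (λ_ X).inv ≫ p g ▷ X

lemma tensorIncl_naturality (g : G) {X Y : C} (f : X ⟶ Y) :
    f ≫ tensorIncl p g Y = tensorIncl p g X ≫ A ◁ f := by
  rw [tensorIncl, tensorIncl, leftUnitor_inv_naturality_assoc, whisker_exchange, Category.assoc]

lemma tensorIncl_comp_tensorIncl_comp_smul {X : C} (s : A ⊗ X ⟶ X) (g h : G) :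
    tensorIncl p h X ≫ tensorIncl p g (A ⊗ X) ≫ A ◁ s ≫ s =
      tensorIncl p h X ≫ s ≫ tensorIncl p g X ≫ s := by
  rw [← reassoc_of% tensorIncl_naturality p g s]

lemma tensorIncl_hom_ext_iff (hp : ∀ X, IsColimit (Cofan.mk (A ⊗ X) fun g => tensorIncl p g X))
    {X Y : C} {f f' : A ⊗ X ⟶ Y} :
    f = f' ↔ ∀ g, tensorIncl p g X ≫ f = tensorIncl p g X ≫ f' :=
  ⟨fun h _ => h ▸ rfl, Cofan.IsColimit.hom_ext (hp X) _ _⟩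

lemma tensorIncl_comp_desc (hp : ∀ X, IsColimit (Cofan.mk (A ⊗ X) fun g => tensorIncl p g X))
    {X Y : C} (f : G → (X ⟶ Y)) (g : G) :
    tensorIncl p g X ≫ Cofan.IsColimit.desc (hp X) f = f g :=
  Cofan.IsColimit.fac (hp X) f g

lemma smul_comp_eq_whiskerLeft_comp_smul_iff
    (hp : ∀ X, IsColimit (Cofan.mk (A ⊗ X) fun g => tensorIncl p g X))
    {X Y : C} (s : A ⊗ X ⟶ X) (t : A ⊗ Y ⟶ Y) (f : X ⟶ Y) :
    s ≫ f = A ◁ f ≫ t ↔ ∀ g, (tensorIncl p g X ≫ s) ≫ f = f ≫ tensorIncl p g Y ≫ t := by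
  simp only [tensorIncl_hom_ext_iff p hp, reassoc_of% tensorIncl_naturality p, Category.assoc]

variable [MonObj A] [Monoid G]

lemma tensorIncl_comp_tensorIncl_comp_mul
    (hmul : ∀ g h, (p g ⊗ₘ p h) ≫ μ = (λ_ (𝟙_ C)).hom ≫ p (g * h)) (g h : G) (X : C) :
    tensorIncl p h X ≫ tensorIncl p g (A ⊗ X) ≫ (α_ A A X).inv ≫ μ ▷ X =
      tensorIncl p (g * h) X := by
  have hgh : p (g * h) = (λ_ (𝟙_ C)).inv ≫ (p g ⊗ₘ p h) ≫ μ := by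
    rw [hmul, Iso.inv_hom_id_assoc]
  simp only [tensorIncl, hgh, comp_whiskerRight, MonoidalCategory.tensorHom_def']
  monoidal

lemma one_whiskerRight_comp_eq_leftUnitor_iff (hone : η = p 1) {X : C} (s : A ⊗ X ⟶ X) :
    η ▷ X ≫ s = (λ_ X).hom ↔ tensorIncl p 1 X ≫ s = 𝟙 X := by
  rw [tensorIncl, ← hone, Category.assoc, Iso.inv_comp_eq, Category.comp_id]

lemma mul_whiskerRight_comp_eq_iff
    (hmul : ∀ g h, (p g ⊗ₘ p h) ≫ μ = (λ_ (𝟙_ C)).hom ≫ p (g * h))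
    (hp : ∀ X, IsColimit (Cofan.mk (A ⊗ X) fun g => tensorIncl p g X)) {X : C} (s : A ⊗ X ⟶ X) :
    μ ▷ X ≫ s = (α_ A A X).hom ≫ A ◁ s ≫ s ↔
      ∀ g h, tensorIncl p (g * h) X ≫ s = (tensorIncl p h X ≫ s) ≫ tensorIncl p g X ≫ s := by
  rw [← cancel_epi (α_ A A X).inv, Iso.inv_hom_id_assoc, tensorIncl_hom_ext_iff p hp]
  simp only [tensorIncl_hom_ext_iff p hp, Category.assoc, tensorIncl_comp_tensorIncl_comp_smul,
    reassoc_of% tensorIncl_comp_tensorIncl_comp_mul p hmul]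

end

section

open MonObj

variable {C : Type*} [Category C] [MonoidalCategory C] {A : C} [MonObj A]
  {G : Type*} [Monoid G] {p : G → (𝟙_ C ⟶ A)}
  (hone : η = p 1) (hmul : ∀ g h, (p g ⊗ₘ p h) ≫ μ = (λ_ (𝟙_ C)).hom ≫ p (g * h))
  (hp : ∀ X, IsColimit (Cofan.mk (A ⊗ X) fun g => tensorIncl p g X))

abbrev modObjOfAction (Z : Action C G) : ModObj A Z.V where
  smul := Cofan.IsColimit.desc (hp Z.V) fun g => Z.ρ g
  one_smul := (one_whiskerRight_comp_eq_leftUnitor_iff p hone _).2 <| by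
    rw [tensorIncl_comp_desc]; exact Z.ρ_one
  mul_smul := (mul_whiskerRight_comp_eq_iff p hmul hp _).2 fun g h => by
    simp only [tensorIncl_comp_desc, map_mul, End.mul_def]

lemma tensorIncl_comp_smul_modObjOfAction (Z : Action C G) (g : G) :
    tensorIncl p g Z.V ≫ (modObjOfAction hone hmul hp Z).smul = Z.ρ g :=
  tensorIncl_comp_desc p hp _ g

def actionOfModObj (X : C) [ModObj A X] : Action C G where
  V := X
  ρ := { toFun g := tensorIncl p g X ≫ γ[A, X]
         map_one' := (one_whiskerRight_comp_eq_leftUnitor_iff p hone γ[A, X]).1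
           (ModObj.one_smul (M := A) X)
         map_mul' := (mul_whiskerRight_comp_eq_iff p hmul hp γ[A, X]).1
           (ModObj.mul_smul (M := A) X) }

def actionToMod : Action C G ⥤ Mod C A where
  obj Z := letI := modObjOfAction hone hmul hp Z; ⟨Z.V⟩
  map {Z W} f := Mod.Hom.mk' f.hom <|
    (smul_comp_eq_whiskerLeft_comp_smul_iff p hp (modObjOfAction hone hmul hp Z).smul
      (modObjOfAction hone hmul hp W).smul _).2 fun g => by
        simpa only [tensorIncl_comp_smul_modObjOfAction] using f.comm g

instance : (actionToMod hone hmul hp).Faithful where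
  map_injective h := Action.Hom.ext (congrArg Mod.Hom.hom h)

instance : (actionToMod hone hmul hp).Full where
  map_surjective {Z W} u := ⟨⟨u.hom, fun g => by
    simpa only [tensorIncl_comp_smul_modObjOfAction] using
      (smul_comp_eq_whiskerLeft_comp_smul_iff p hp (modObjOfAction hone hmul hp Z).smul
        (modObjOfAction hone hmul hp W).smul u.hom).1 u.isModHom.smul_hom g⟩, rfl⟩

lemma actionToMod_obj_actionOfModObj (N : Mod C A) :
    (actionToMod hone hmul hp).obj (actionOfModObj hone hmul hp N.X) = N := by
  obtain ⟨X, _⟩ := N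
  dsimp only [actionToMod]
  congr 1
  ext
  exact (tensorIncl_hom_ext_iff p hp).2 fun g => tensorIncl_comp_desc p hp _ g

instance : (actionToMod hone hmul hp).EssSurj where
  mem_essImage N := ⟨_, ⟨eqToIso (actionToMod_obj_actionOfModObj hone hmul hp N)⟩⟩

instance : (actionToMod hone hmul hp).IsEquivalence where

noncomputable def actionEquivMod : Action C G ≌ Mod C A :=
  (actionToMod hone hmul hp).asEquivalence

noncomputable def actionEquivModFunctorCompForgetIso :
    (actionEquivMod hone hmul hp).functor ⋙ Mod.forget A ≅ Action.forget C G :=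
  Iso.refl _

end

open CartesianMonoidalCategory

theorem statement17 {C : Type (u + 1)} [LargeCategory C]
    [HasPullbacks C] [HasTerminal C] [HasBinaryProducts C]
    (hco : ∀ (ι : Type u) (X : ι → C), HasCoproduct X)
    (huniv : ∀ (ι : Type u) (X : ι → C) (c : Cofan X), IsColimit c →
      ∀ {Y : C} (f : Y ⟶ c.pt),
        Nonempty (IsColimit (Cofan.mk Y (fun i => pullback.snd (c.inj i) f))))
    (G : Type u) [Group G] :
    letI : CartesianMonoidalCategory C := @CartesianMonoidalCategory.ofHasFiniteProducts C _
      hasFiniteProducts_of_has_binary_and_terminal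
    haveI : HasCoproduct (fun _ : G => ⊤_ C) := hco G _
    ∀ (M : Mon C) (hX : M.X = ∐ (fun _ : G => ⊤_ C)),
      MonObj.one (X := M.X) ≫ eqToHom hX = Sigma.ι (fun _ : G => ⊤_ C) (1 : G) →
      (∀ g h : G,
        ((Sigma.ι (fun _ : G => ⊤_ C) g ≫ eqToHom hX.symm) ⊗ₘ
            (Sigma.ι (fun _ : G => ⊤_ C) h ≫ eqToHom hX.symm)) ≫ MonObj.mul (X := M.X) ≫ eqToHom hX =
          (λ_ (𝟙_ C)).hom ≫ Sigma.ι (fun _ : G => ⊤_ C) (g * h)) →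
      ∃ Φ : Action C (MonCat.of G) ≌ Mod C M.X,
        Nonempty (Φ.functor ⋙ Mod.forget M.X ≅ Action.forget C (MonCat.of G)) := by
  let _ : CartesianMonoidalCategory C := @CartesianMonoidalCategory.ofHasFiniteProducts C _
    hasFiniteProducts_of_has_binary_and_terminal
  have := hco G fun _ => ⊤_ C
  intro M hX hone hmul
  obtain ⟨A, _⟩ := M
  dsimp only at hX hone hmul ⊢
  subst hX
  simp only [eqToHom_refl, Category.comp_id] at hone hmul
  have hp (X : C) : IsColimit (Cofan.mk ((∐ fun _ : G => ⊤_ C) ⊗ X)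
      fun g => tensorIncl (Sigma.ι fun _ : G => ⊤_ C) g X) :=
    Cofan.isColimitOfIsPullback (Cofan.mk _ (Sigma.ι _)) (fst _ X)
      (huniv G _ _ (coproductIsCoproduct _) _).some
      fun g => isPullback_leftUnitor_inv_comp_whiskerRight (Sigma.ι (fun _ : G => ⊤_ C) g) X
  exact ⟨actionEquivMod hone hmul hp, ⟨actionEquivModFunctorCompForgetIso hone hmul hp⟩⟩
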